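/- Let D be an integral domain with fraction field K, and let f(x,y) = f₀xⁿ + ⋯ + f_nyⁿ be a binary form of degree n with coefficients in D, with f₀ ≠ 0 and f(x,1) separable over K. Let a ∈ D and let h(x) ∈ D[x] be the unique polynomial with f(x,1) − f(a,1) = (x − a)·h(x). Then in L the identity h(θ) = ζ_{n−1} + a·ζ_{n−2} + a²·ζ_{n−3} + ⋯ + a^{n−2}·ζ₁ + h(0) holds; in particular h(θ) lies in R_f. -/

import Mathlib

open Polynomial

noncomputable def fxOne {n : ℕ} {R : Type*} [CommRing R] (f : Fin (n+1) → R) : R[X] :=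
  ∑ i : Fin (n+1), C (f i) * X ^ (n - (i:ℕ))

variable {D : Type*} [CommRing D] [IsDomain D]

/-- The monic polynomial `g(x) = f(x,1)/f₀` over the fraction field `K` of `D`. -/
noncomputable def gPoly {n : ℕ} (f : Fin (n+1) → D) : (FractionRing D)[X] :=
  C ((algebraMap D (FractionRing D) (f 0))⁻¹) * (fxOne f).map (algebraMap D (FractionRing D))

/-- The algebra `L = K[x]/(g(x))`. -/
noncomputable abbrev LD {n : ℕ} (f : Fin (n+1) → D) : Type _ := AdjoinRoot (gPoly f)

/-- `θ`, the image of `x` in `L`. -/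
noncomputable def theta {n : ℕ} (f : Fin (n+1) → D) : LD f := AdjoinRoot.root (gPoly f)

/-- `ζ_k = f₀θ^k + f₁θ^{k-1} + ⋯ + f_{k-1}θ ∈ L`. -/
noncomputable def zeta {n : ℕ} (f : Fin (n+1) → D) (k : ℕ) : LD f :=
  ∑ j ∈ Finset.range k,
    algebraMap D (LD f) (if h : j < n + 1 then f ⟨j, h⟩ else 0) * theta f ^ (k - j)

/-- The `D`-submodule `R_f` of `L`, with basis `{1, ζ₁, …, ζ_{n−1}}`. -/
noncomputable def Rf {n : ℕ} (f : Fin (n+1) → D) : Submodule D (LD f) :=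
  Submodule.span D ({1} ∪ {x : LD f | ∃ k, 1 ≤ k ∧ k ≤ n - 1 ∧ x = zeta f k})

/-- The `D`-submodule `I_f(k)` of `L`, with basis `{1, θ, …, θ^k, ζ_{k+1}, …, ζ_{n−1}}`. -/
noncomputable def If {n : ℕ} (f : Fin (n+1) → D) (k : ℕ) : Submodule D (LD f) :=
  Submodule.span D ({x : LD f | ∃ i ≤ k, x = theta f ^ i} ∪
    {x : LD f | ∃ j, k + 1 ≤ j ∧ j ≤ n - 1 ∧ x = zeta f j})

/-!
Write `F_k = φ₀Xᵏ + ⋯ + φ_k` (`formPoly`) for the truncations of `f(x,1)` and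
`Z_k = F_k - φ_k` (`zetaPoly`), so that `ζ_k = Z_k(θ)`. Horner's rule `F_{k+1} = X F_k + φ_{k+1}`
gives, by induction on `n`,
`F_n - F_n(a) = (X - a) · ∑_{j<n} aʲ F_{n-1-j}`. Hence `h = ∑_{j<n} aʲ F_{n-1-j}`, which splits as
`∑_{j<n-1} aʲ Z_{n-1-j}` plus a constant; the constant is `h(0)` because every `Z_k` vanishes at `0`.
-/

open Finset

namespace BinaryForm

variable {R : Type*} [CommRing R] (φ : ℕ → R)

noncomputable def formPoly (k : ℕ) : R[X] :=
  ∑ i ∈ range (k + 1), C (φ i) * X ^ (k - i)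

noncomputable def zetaPoly (k : ℕ) : R[X] :=
  ∑ i ∈ range k, C (φ i) * X ^ (k - i)

theorem formPoly_eq_zetaPoly_add_C (k : ℕ) : formPoly φ k = zetaPoly φ k + C (φ k) := by
  simp [formPoly, zetaPoly, sum_range_succ]

@[simp]
theorem zetaPoly_zero : zetaPoly φ 0 = 0 := by
  simp [zetaPoly]

theorem zetaPoly_succ (k : ℕ) : zetaPoly φ (k + 1) = X * formPoly φ k := by
  rw [zetaPoly, formPoly, mul_sum]
  refine sum_congr rfl fun i hi => ?_
  rw [mul_left_comm, ← pow_succ', Nat.sub_add_comm (mem_range_succ_iff.mp hi)]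

theorem formPoly_succ (k : ℕ) : formPoly φ (k + 1) = X * formPoly φ k + C (φ (k + 1)) := by
  rw [formPoly_eq_zetaPoly_add_C, zetaPoly_succ]

theorem eval_zero_zetaPoly (k : ℕ) : (zetaPoly φ k).eval 0 = 0 := by
  cases k <;> simp [zetaPoly_succ]

theorem X_sub_C_mul_sum_formPoly (a : R) (n : ℕ) :
    (X - C a) * ∑ j ∈ range n, C (a ^ j) * formPoly φ (n - 1 - j) =
      formPoly φ n - C ((formPoly φ n).eval a) := by
  induction n with
  | zero => simp [formPoly]
  | succ n ih =>
    have hsum : ∑ j ∈ range (n + 1), C (a ^ j) * formPoly φ (n + 1 - 1 - j) =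
        C a * ∑ j ∈ range n, C (a ^ j) * formPoly φ (n - 1 - j) + formPoly φ n := by
      rw [sum_range_succ', mul_sum]
      congr 1
      · refine sum_congr rfl fun j _ => ?_
        rw [pow_succ', C_mul, mul_assoc, show n + 1 - 1 - (j + 1) = n - 1 - j by omega]
      · simp
    rw [hsum, mul_add, mul_left_comm, ih, formPoly_succ]
    simp only [eval_add, eval_mul, eval_X, eval_C, C_add, C_mul]
    ring

theorem sum_formPoly_eq_sum_zetaPoly_add_C (a : R) (n : ℕ) :
    ∑ j ∈ range n, C (a ^ j) * formPoly φ (n - 1 - j) =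
      ∑ j ∈ range (n - 1), C (a ^ j) * zetaPoly φ (n - 1 - j) +
        C (∑ j ∈ range n, a ^ j * φ (n - 1 - j)) := by
  simp only [formPoly_eq_zetaPoly_add_C, mul_add, sum_add_distrib, map_sum, C_mul]
  cases n with
  | zero => simp
  | succ m => simp [sum_range_succ _ m]

theorem eq_sum_zetaPoly_add_C_eval_zero {a : R} {n : ℕ} {h : R[X]}
    (hh : formPoly φ n - C ((formPoly φ n).eval a) = (X - C a) * h) :
    h = ∑ j ∈ range (n - 1), C (a ^ j) * zetaPoly φ (n - 1 - j) + C (h.eval 0) := by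
  have hquot : h = ∑ j ∈ range n, C (a ^ j) * formPoly φ (n - 1 - j) :=
    (monic_X_sub_C a).isRegular.left (by simp only [← hh, X_sub_C_mul_sum_formPoly])
  rw [hquot, sum_formPoly_eq_sum_zetaPoly_add_C]
  simp [eval_finsetSum, eval_zero_zetaPoly]

section Coefficients

variable {n : ℕ} (f : Fin (n + 1) → R)

def coeffSeq (j : ℕ) : R :=
  if h : j < n + 1 then f ⟨j, h⟩ else 0

theorem fxOne_eq_formPoly : fxOne f = formPoly (coeffSeq f) n := by
  rw [fxOne, formPoly, ← Fin.sum_univ_eq_sum_range (fun i => C (coeffSeq f i) * X ^ (n - i))]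
  simp [coeffSeq, Fin.is_le]

end Coefficients

end BinaryForm

open BinaryForm

section Rf

variable {n : ℕ} (f : Fin (n + 1) → D)

theorem aeval_theta_zetaPoly (k : ℕ) : aeval (theta f) (zetaPoly (coeffSeq f) k) = zeta f k := by
  simp [zetaPoly, zeta, coeffSeq]

theorem zeta_mem_Rf {k : ℕ} (hk₁ : 1 ≤ k) (hk : k ≤ n - 1) : zeta f k ∈ Rf f :=
  Submodule.subset_span (Or.inr ⟨k, hk₁, hk, rfl⟩)

theorem algebraMap_mem_Rf (d : D) : algebraMap D (LD f) d ∈ Rf f := by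
  rw [Algebra.algebraMap_eq_smul_one]
  exact Submodule.smul_mem _ _ (Submodule.subset_span (Or.inl rfl))

end Rf

theorem stmt12_general (n : ℕ) (f : Fin (n+1) → D)
    (a : D) (h : D[X])
    (hh : fxOne f - C ((fxOne f).eval a) = (X - C a) * h) :
    Polynomial.aeval (theta f) h =
      (∑ j ∈ Finset.range (n - 1), algebraMap D (LD f) (a ^ j) * zeta f (n - 1 - j)) +
        algebraMap D (LD f) (h.eval 0) ∧
    Polynomial.aeval (theta f) h ∈ Rf f := by
  rw [fxOne_eq_formPoly] at hh
  have formula : aeval (theta f) h =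
      (∑ j ∈ range (n - 1), algebraMap D (LD f) (a ^ j) * zeta f (n - 1 - j)) +
        algebraMap D (LD f) (h.eval 0) := by
    conv_lhs => rw [eq_sum_zetaPoly_add_C_eval_zero _ hh]
    simp [aeval_theta_zetaPoly]
  refine ⟨formula, formula ▸ Submodule.add_mem _ (Submodule.sum_mem _ fun j hj => ?_)
    (algebraMap_mem_Rf f _)⟩
  have hj : j < n - 1 := mem_range.mp hj
  rw [← Algebra.smul_def]
  exact Submodule.smul_mem _ _ (zeta_mem_Rf f (by omega) (by omega))

theorem stmt12 (n : ℕ) (f : Fin (n+1) → D) (hf0 : f 0 ≠ 0)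
    (hsep : ((fxOne f).map (algebraMap D (FractionRing D))).Separable)
    (a : D) (h : D[X])
    (hh : fxOne f - C ((fxOne f).eval a) = (X - C a) * h) :
    Polynomial.aeval (theta f) h =
      (∑ j ∈ Finset.range (n - 1), algebraMap D (LD f) (a ^ j) * zeta f (n - 1 - j)) +
        algebraMap D (LD f) (h.eval 0) ∧
    Polynomial.aeval (theta f) h ∈ Rf f :=
  stmt12_general n f a h hh
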